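/- Under the setup of the posterior-Gibbs kernels on finite types (pmf μ on X, conditionals q(·|x) ≪ p(·|x) on Z, latent marginals q̄, p̄, kernels K_q(z,z') = Σ_x r_q(x|z)·q(z'|x) and K_p(z,z') = Σ_x r_p(x|z)·p(z'|x)), let H be a positive integer and define the H-step path pmfs on Z^{H+1}, both started from q̄: P_q^H(z_0,…,z_H) = q̄(z_0)·∏_{t=0}^{H−1} K_q(z_t,z_{t+1}) and P_p^H(z_0,…,z_H) = q̄(z_0)·∏_{t=0}^{H−1} K_p(z_t,z_{t+1}). Then: (a) q̄ is stationary for K_q (Σ_z q̄(z)·K_q(z,z') = q̄(z') for all z'); and (b) the H-linear path-space bound holds: KL(P_q^H ‖ P_p^H) ≤ H·(2·Δ̄ − KL(q̄‖p̄)), where Δ̄ = Σ_x μ(x)·KL(q(·|x)‖p(·|x)). -/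

import Mathlib

/-- A probability mass function on a finite type: nonnegative and summing to 1. -/
def IsPMF {Z : Type*} [Fintype Z] (q : Z → ℝ) : Prop :=
  (∀ z, 0 ≤ q z) ∧ ∑ z, q z = 1

/-- KL divergence between pmfs on a finite type (convention 0·log 0 = 0,
automatic in Lean). -/
noncomputable def KL {Z : Type*} [Fintype Z] (q p : Z → ℝ) : ℝ :=
  ∑ z, q z * Real.log (q z / p z)

/-- Latent marginal `q̄(z) = Σ_x μ(x)·q(z|x)`. -/
noncomputable def latMarg {X Z : Type*} [Fintype X] (μ : X → ℝ) (q : X → Z → ℝ) :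
    Z → ℝ :=
  fun z => ∑ x, μ x * q x z

/-- Reverse conditional `r_q(x|z) = μ(x)·q(z|x)/q̄(z)`. -/
noncomputable def revCond {X Z : Type*} [Fintype X] (μ : X → ℝ) (q : X → Z → ℝ)
    (z : Z) : X → ℝ :=
  fun x => μ x * q x z / latMarg μ q z

/-- Posterior-Gibbs kernel `K_q(z,z') = Σ_x r_q(x|z)·q(z'|x)`. -/
noncomputable def gibbsK {X Z : Type*} [Fintype X] (μ : X → ℝ) (q : X → Z → ℝ)
    (z z' : Z) : ℝ :=
  ∑ x, revCond μ q z x * q x z'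

/-- `H`-step path pmf on `Z^{H+1}` started from `init` with Markov kernel `Ker`:
`path ↦ init(z_0)·∏_{t=0}^{H−1} Ker(z_t, z_{t+1})`. -/
noncomputable def pathPMF {Z : Type*} (init : Z → ℝ) (Ker : Z → Z → ℝ) (H : ℕ) :
    (Fin (H + 1) → Z) → ℝ :=
  fun path => init (path 0) * ∏ t : Fin H, Ker (path t.castSucc) (path t.succ)


open Finset

/-- Key algebraic identity for splitting KL terms of products. -/
lemma klterm_mul (a b c d : ℝ) (hb : a ≠ 0 → b ≠ 0) (hd : a ≠ 0 → c ≠ 0 → d ≠ 0) :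
    (a * c) * Real.log ((a * c) / (b * d)) =
      c * (a * Real.log (a / b)) + a * (c * Real.log (c / d)) := by
  by_cases ha : a = 0
  · simp [ha]
  by_cases hc : c = 0
  · simp [hc]
  have hb' := hb ha
  have hd' := hd ha hc
  have h1 : (a * c) / (b * d) = (a / b) * (c / d) := by
    field_simp
  rw [h1, Real.log_mul (div_ne_zero ha hb') (div_ne_zero hc hd')]
  ring

/-- Log-sum inequality. -/
lemma log_sum_ineq {ι : Type*} (s : Finset ι) (a b : ι → ℝ)
    (ha : ∀ i ∈ s, 0 ≤ a i) (hb : ∀ i ∈ s, 0 ≤ b i)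
    (hab : ∀ i ∈ s, b i = 0 → a i = 0) :
    (∑ i ∈ s, a i) * Real.log ((∑ i ∈ s, a i) / (∑ i ∈ s, b i)) ≤
      ∑ i ∈ s, a i * Real.log (a i / b i) := by
  set A := ∑ i ∈ s, a i with hA
  set B := ∑ i ∈ s, b i with hB
  have hA0 : 0 ≤ A := Finset.sum_nonneg ha
  rcases hA0.eq_or_lt with hA1 | hA1
  · have hall : ∀ i ∈ s, a i = 0 := by
      intro i hi
      exact (Finset.sum_eq_zero_iff_of_nonneg ha).1 hA1.symm i hi
    have : ∑ i ∈ s, a i * Real.log (a i / b i) = 0 :=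
      Finset.sum_eq_zero fun i hi => by rw [hall i hi]; ring
    rw [this, ← hA1]; simp
  have hB1 : 0 < B := by
    rcases (Finset.sum_nonneg hb).eq_or_lt with h | h
    · exfalso
      have hall : ∀ i ∈ s, b i = 0 := by
        intro i hi
        exact (Finset.sum_eq_zero_iff_of_nonneg hb).1 h.symm i hi
      have : A = 0 := Finset.sum_eq_zero fun i hi => hab i hi (hall i hi)
      exact absurd this hA1.ne'
    · exact h
  -- per-term bound:  a i * log(A/B) - a i * log(a i / b i) ≤ A/B * b i - a i
  have key : ∀ i ∈ s, a i * Real.log (A / B) - a i * Real.log (a i / b i) ≤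
      A / B * b i - a i := by
    intro i hi
    by_cases hai : a i = 0
    · rw [hai]
      have : (0:ℝ) ≤ A / B * b i := mul_nonneg (by positivity) (hb i hi)
      linarith
    have hai' : 0 < a i := lt_of_le_of_ne (ha i hi) (Ne.symm hai)
    have hbi : 0 < b i := by
      rcases (hb i hi).eq_or_lt with h | h
      · exact absurd (hab i hi h.symm) hai
      · exact h
    have hlog : Real.log (A / B) - Real.log (a i / b i) =
        Real.log ((A / B) / (a i / b i)) :=
      (Real.log_div (by positivity) (by positivity)).symm
    have hu : (0:ℝ) < (A / B) / (a i / b i) := by positivity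
    have := Real.log_le_sub_one_of_pos hu
    have h2 : a i * Real.log ((A / B) / (a i / b i)) ≤
        a i * ((A / B) / (a i / b i) - 1) :=
      mul_le_mul_of_nonneg_left this hai'.le
    have h3 : a i * ((A / B) / (a i / b i) - 1) = A / B * b i - a i := by
      field_simp
    calc a i * Real.log (A / B) - a i * Real.log (a i / b i)
        = a i * (Real.log (A / B) - Real.log (a i / b i)) := by ring
      _ = a i * Real.log ((A / B) / (a i / b i)) := by rw [hlog]
      _ ≤ A / B * b i - a i := h2.trans_eq h3
  have hsum := Finset.sum_le_sum key
  have hrhs : ∑ i ∈ s, (A / B * b i - a i) = 0 := by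
    rw [Finset.sum_sub_distrib, ← Finset.mul_sum, ← hA, ← hB]
    field_simp
    ring
  have hlhs : ∑ i ∈ s, (a i * Real.log (A / B) - a i * Real.log (a i / b i)) =
      A * Real.log (A / B) - ∑ i ∈ s, a i * Real.log (a i / b i) := by
    rw [Finset.sum_sub_distrib, ← Finset.sum_mul, ← hA]
  rw [hlhs, hrhs] at hsum
  linarith

section Helpers

variable {X Z : Type*} [Fintype X] [Fintype Z]

lemma term_nonneg (μ : X → ℝ) (hμ : IsPMF μ) (q : X → Z → ℝ)
    (hq : ∀ x, 0 < μ x → IsPMF (q x)) (x : X) (z : Z) : 0 ≤ μ x * q x z := by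
  rcases (hμ.1 x).eq_or_lt with h | h
  · rw [← h]; simp
  · exact mul_nonneg h.le ((hq x h).1 z)

lemma lm_nonneg (μ : X → ℝ) (hμ : IsPMF μ) (q : X → Z → ℝ)
    (hq : ∀ x, 0 < μ x → IsPMF (q x)) (z : Z) : 0 ≤ latMarg μ q z :=
  Finset.sum_nonneg fun x _ => term_nonneg μ hμ q hq x z

lemma lm_term_zero (μ : X → ℝ) (hμ : IsPMF μ) (q : X → Z → ℝ)
    (hq : ∀ x, 0 < μ x → IsPMF (q x)) (z : Z) (h : latMarg μ q z = 0) (x : X) :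
    μ x * q x z = 0 :=
  (Finset.sum_eq_zero_iff_of_nonneg fun x _ => term_nonneg μ hμ q hq x z).1 h x
    (Finset.mem_univ x)

lemma lm_pos_of (μ : X → ℝ) (hμ : IsPMF μ) (q : X → Z → ℝ)
    (hq : ∀ x, 0 < μ x → IsPMF (q x)) (z : Z) (x : X) (hx : 0 < μ x)
    (hz : q x z ≠ 0) : 0 < latMarg μ q z := by
  have h1 : 0 < μ x * q x z :=
    lt_of_le_of_ne (term_nonneg μ hμ q hq x z) (by simp [hx.ne', hz, mul_ne_zero])
  exact lt_of_lt_of_le h1 (Finset.single_le_sum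
    (fun x _ => term_nonneg μ hμ q hq x z) (Finset.mem_univ x))

lemma lm_pos_trans (μ : X → ℝ) (hμ : IsPMF μ) (q p : X → Z → ℝ)
    (hq : ∀ x, 0 < μ x → IsPMF (q x)) (hp : ∀ x, 0 < μ x → IsPMF (p x))
    (habs : ∀ x, 0 < μ x → ∀ z, p x z = 0 → q x z = 0)
    (z : Z) (h : 0 < latMarg μ q z) : 0 < latMarg μ p z := by
  rcases (lm_nonneg μ hμ p hp z).eq_or_lt with h0 | h0
  · exfalso
    have hzero : latMarg μ q z = 0 := Finset.sum_eq_zero fun x _ => by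
      rcases (hμ.1 x).eq_or_lt with hx | hx
      · rw [← hx]; ring
      · have := lm_term_zero μ hμ p hp z h0.symm x
        have hpz : p x z = 0 := by
          rcases mul_eq_zero.1 this with h' | h'
          · exact absurd h' hx.ne'
          · exact h'
        rw [habs x hx z hpz]; ring
    exact absurd hzero h.ne'
  · exact h0

lemma revCond_sum_one (μ : X → ℝ) (q : X → Z → ℝ) (z : Z)
    (hz : latMarg μ q z ≠ 0) : ∑ x, revCond μ q z x = 1 := by
  unfold revCond
  rw [← Finset.sum_div]
  exact div_self hz

lemma gibbsK_nonneg (μ : X → ℝ) (hμ : IsPMF μ) (q : X → Z → ℝ)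
    (hq : ∀ x, 0 < μ x → IsPMF (q x)) (z z' : Z) : 0 ≤ gibbsK μ q z z' := by
  refine Finset.sum_nonneg fun x _ => ?_
  rcases (hμ.1 x).eq_or_lt with h | h
  · simp [revCond, ← h]
  · exact mul_nonneg (div_nonneg (term_nonneg μ hμ q hq x z)
      (lm_nonneg μ hμ q hq z)) ((hq x h).1 z')

lemma gibbsK_ne_imp (μ : X → ℝ) (hμ : IsPMF μ) (q : X → Z → ℝ) (z z' : Z)
    (h : gibbsK μ q z z' ≠ 0) :
    ∃ x, 0 < μ x ∧ q x z ≠ 0 ∧ q x z' ≠ 0 := by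
  obtain ⟨x, -, hx⟩ := Finset.exists_ne_zero_of_sum_ne_zero h
  have h1 : revCond μ q z x ≠ 0 := fun h' => hx (by rw [h']; ring)
  have h2 : q x z' ≠ 0 := fun h' => hx (by rw [h']; ring)
  have h3 : μ x * q x z ≠ 0 := fun h' => h1 (by simp [revCond, h'])
  have h4 : μ x ≠ 0 := fun h' => h3 (by rw [h']; ring)
  have h5 : q x z ≠ 0 := fun h' => h3 (by rw [h']; ring)
  exact ⟨x, lt_of_le_of_ne (hμ.1 x) (Ne.symm h4), h5, h2⟩

lemma gibbsK_row_sum (μ : X → ℝ) (hμ : IsPMF μ) (q : X → Z → ℝ)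
    (hq : ∀ x, 0 < μ x → IsPMF (q x)) (z : Z) (hz : latMarg μ q z ≠ 0) :
    ∑ z', gibbsK μ q z z' = 1 := by
  unfold gibbsK
  rw [Finset.sum_comm]
  have : ∀ x ∈ Finset.univ (α := X),
      (∑ z', revCond μ q z x * q x z') = revCond μ q z x := by
    intro x _
    rcases (hμ.1 x).eq_or_lt with h | h
    · simp [revCond, ← h]
    · rw [← Finset.mul_sum, (hq x h).2, mul_one]
  rw [Finset.sum_congr rfl this]
  exact revCond_sum_one μ q z hz

lemma gibbsK_pos_trans (μ : X → ℝ) (hμ : IsPMF μ) (q p : X → Z → ℝ)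
    (hq : ∀ x, 0 < μ x → IsPMF (q x)) (hp : ∀ x, 0 < μ x → IsPMF (p x))
    (habs : ∀ x, 0 < μ x → ∀ z, p x z = 0 → q x z = 0)
    (z z' : Z) (h : gibbsK μ q z z' ≠ 0) : 0 < gibbsK μ p z z' := by
  obtain ⟨x, hx, hz, hz'⟩ := gibbsK_ne_imp μ hμ q z z' h
  have hpz : p x z ≠ 0 := fun h' => hz (habs x hx z h')
  have hpz' : p x z' ≠ 0 := fun h' => hz' (habs x hx z' h')
  have hpzpos : 0 < p x z := lt_of_le_of_ne ((hp x hx).1 z) (Ne.symm hpz)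
  have hpz'pos : 0 < p x z' := lt_of_le_of_ne ((hp x hx).1 z') (Ne.symm hpz')
  have hpbar : 0 < latMarg μ p z := lm_pos_of μ hμ p hp z x hx hpz
  have hterm : 0 < revCond μ p z x * p x z' := by
    apply mul_pos _ hpz'pos
    unfold revCond
    positivity
  refine lt_of_lt_of_le hterm ?_
  unfold gibbsK
  refine Finset.single_le_sum (f := fun y => revCond μ p z y * p y z') (fun y _ => ?_) (Finset.mem_univ x)
  rcases (hμ.1 y).eq_or_lt with h' | h'
  · simp [revCond, ← h']
  · exact mul_nonneg (div_nonneg (term_nonneg μ hμ p hp y z)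
      (lm_nonneg μ hμ p hp z)) ((hp y h').1 z')

lemma gibbsK_target_pos (μ : X → ℝ) (hμ : IsPMF μ) (q : X → Z → ℝ)
    (hq : ∀ x, 0 < μ x → IsPMF (q x)) (z z' : Z) (h : gibbsK μ q z z' ≠ 0) :
    0 < latMarg μ q z' := by
  obtain ⟨x, hx, -, hz'⟩ := gibbsK_ne_imp μ hμ q z z' h
  exact lm_pos_of μ hμ q hq z' x hx hz'

/-- Stationarity of the latent marginal. -/
lemma stationary (μ : X → ℝ) (hμ : IsPMF μ) (q : X → Z → ℝ)
    (hq : ∀ x, 0 < μ x → IsPMF (q x)) (z' : Z) :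
    ∑ z, latMarg μ q z * gibbsK μ q z z' = latMarg μ q z' := by
  have step1 : ∀ z : Z, latMarg μ q z * gibbsK μ q z z' =
      ∑ x, μ x * q x z * q x z' := by
    intro z
    unfold gibbsK
    rw [Finset.mul_sum]
    refine Finset.sum_congr rfl fun x _ => ?_
    by_cases hz : latMarg μ q z = 0
    · simp [hz, lm_term_zero μ hμ q hq z hz x]
    · unfold revCond
      field_simp
  rw [Finset.sum_congr rfl fun z _ => step1 z, Finset.sum_comm]
  unfold latMarg
  refine Finset.sum_congr rfl fun x _ => ?_
  rcases (hμ.1 x).eq_or_lt with h | h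
  · simp [← h]
  · rw [← Finset.sum_mul, ← Finset.mul_sum, (hq x h).2, mul_one]

end Helpers

section PathLemmas

variable {X Z : Type*} [Fintype X] [Fintype Z]

/-- Sum over paths via snoc decomposition. -/
lemma sum_snoc {H : ℕ} (F : (Fin (H + 2) → Z) → ℝ) :
    ∑ f : Fin (H + 2) → Z, F f =
      ∑ g : Fin (H + 1) → Z, ∑ z : Z, F (Fin.snoc g z) := by
  rw [← Finset.sum_product']
  apply Fintype.sum_equiv
    (⟨fun f => (Fin.init f, f (Fin.last (H + 1))),
      fun gz => Fin.snoc gz.1 gz.2,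
      fun f => Fin.snoc_init_self f,
      fun gz => by simp [Fin.init_snoc, Fin.snoc_last]⟩ :
        (Fin (H + 2) → Z) ≃ (Fin (H + 1) → Z) × Z)
  intro f
  simp [Fin.snoc_init_self]

lemma pathPMF_snoc (init : Z → ℝ) (K : Z → Z → ℝ) (H : ℕ)
    (g : Fin (H + 1) → Z) (z : Z) :
    pathPMF init K (H + 1) (Fin.snoc g z) =
      pathPMF init K H g * K (g (Fin.last H)) z := by
  unfold pathPMF
  rw [Fin.prod_univ_castSucc]
  have h0 : (Fin.snoc g z : Fin (H + 2) → Z) 0 = g 0 := by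
    have : (0 : Fin (H + 2)) = Fin.castSucc (0 : Fin (H + 1)) := by simp
    rw [this, Fin.snoc_castSucc]
  rw [h0]
  simp only [Fin.snoc_castSucc, Fin.succ_castSucc, Fin.succ_last, Fin.snoc_last]
  ring


variable (μ : X → ℝ) (q p : X → Z → ℝ)

lemma path_nonneg (hμ : IsPMF μ) (hq : ∀ x, 0 < μ x → IsPMF (q x))
    (H : ℕ) (f : Fin (H + 1) → Z) :
    0 ≤ pathPMF (latMarg μ q) (gibbsK μ q) H f :=
  mul_nonneg (lm_nonneg μ hμ q hq _)
    (Finset.prod_nonneg fun t _ => gibbsK_nonneg μ hμ q hq _ _)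

lemma path_support (hμ : IsPMF μ) (hq : ∀ x, 0 < μ x → IsPMF (q x))
    (H : ℕ) (f : Fin (H + 1) → Z)
    (h : pathPMF (latMarg μ q) (gibbsK μ q) H f ≠ 0) :
    ∀ t, 0 < latMarg μ q (f t) := by
  unfold pathPMF at h
  have h1 : latMarg μ q (f 0) ≠ 0 := fun h' => h (by rw [h', zero_mul])
  have h2 : ∀ t : Fin H, gibbsK μ q (f t.castSucc) (f t.succ) ≠ 0 := by
    intro t
    have := mul_ne_zero_iff.1 h
    exact Finset.prod_ne_zero_iff.1 this.2 t (Finset.mem_univ t)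
  intro t
  induction t using Fin.cases with
  | zero => exact lt_of_le_of_ne (lm_nonneg μ hμ q hq _) (Ne.symm h1)
  | succ i => exact gibbsK_target_pos μ hμ q hq _ _ (h2 i)

lemma path_p_pos (hμ : IsPMF μ) (hq : ∀ x, 0 < μ x → IsPMF (q x))
    (hp : ∀ x, 0 < μ x → IsPMF (p x))
    (habs : ∀ x, 0 < μ x → ∀ z, p x z = 0 → q x z = 0)
    (H : ℕ) (f : Fin (H + 1) → Z)
    (h : pathPMF (latMarg μ q) (gibbsK μ q) H f ≠ 0) :
    0 < pathPMF (latMarg μ q) (gibbsK μ p) H f := by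
  have hsupp := path_support μ q hμ hq H f h
  unfold pathPMF at h ⊢
  have h2 : ∀ t : Fin H, gibbsK μ q (f t.castSucc) (f t.succ) ≠ 0 := by
    intro t
    have := mul_ne_zero_iff.1 h
    exact Finset.prod_ne_zero_iff.1 this.2 t (Finset.mem_univ t)
  refine mul_pos (hsupp 0) (Finset.prod_pos fun t _ => ?_)
  exact gibbsK_pos_trans μ hμ q p hq hp habs _ _ (h2 t)

lemma path_marg (hμ : IsPMF μ) (hq : ∀ x, 0 < μ x → IsPMF (q x)) :
    ∀ H : ℕ, ∀ g : Z → ℝ,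
    (∑ f : Fin (H + 1) → Z,
        pathPMF (latMarg μ q) (gibbsK μ q) H f * g (f (Fin.last H))) =
      ∑ z, latMarg μ q z * g z := by
  intro H
  induction H with
  | zero =>
    intro g
    apply Fintype.sum_equiv (Equiv.funUnique (Fin 1) Z)
    intro f
    simp [pathPMF]
  | succ H ih =>
    intro g
    rw [sum_snoc (fun f => pathPMF (latMarg μ q) (gibbsK μ q) (H + 1) f *
      g (f (Fin.last (H + 1))))]
    have step : ∀ φ : Fin (H + 1) → Z, ∀ z : Z,
        pathPMF (latMarg μ q) (gibbsK μ q) (H + 1) (Fin.snoc φ z) *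
          g ((Fin.snoc φ z : Fin (H + 2) → Z) (Fin.last (H + 1))) =
        pathPMF (latMarg μ q) (gibbsK μ q) H φ *
          (gibbsK μ q (φ (Fin.last H)) z * g z) := by
      intro φ z
      rw [pathPMF_snoc]
      simp only [Fin.snoc_last]
      ring
    calc ∑ φ : Fin (H + 1) → Z, ∑ z : Z,
          pathPMF (latMarg μ q) (gibbsK μ q) (H + 1) (Fin.snoc φ z) *
            g ((Fin.snoc φ z : Fin (H + 2) → Z) (Fin.last (H + 1)))
        = ∑ φ : Fin (H + 1) → Z, pathPMF (latMarg μ q) (gibbsK μ q) H φ *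
            (∑ z, gibbsK μ q (φ (Fin.last H)) z * g z) := by
          refine Finset.sum_congr rfl fun φ _ => ?_
          rw [Finset.mul_sum]
          exact Finset.sum_congr rfl fun z _ => step φ z
      _ = ∑ z0, latMarg μ q z0 * ∑ z, gibbsK μ q z0 z * g z :=
          ih (fun z0 => ∑ z, gibbsK μ q z0 z * g z)
      _ = ∑ z, latMarg μ q z * g z := by
          have : ∀ z0 : Z, latMarg μ q z0 * ∑ z, gibbsK μ q z0 z * g z =
              ∑ z, latMarg μ q z0 * gibbsK μ q z0 z * g z := by
            intro z0
            rw [Finset.mul_sum]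
            exact Finset.sum_congr rfl fun z _ => by ring
          rw [Finset.sum_congr rfl fun z0 _ => this z0, Finset.sum_comm]
          refine Finset.sum_congr rfl fun z _ => ?_
          rw [← Finset.sum_mul, stationary μ hμ q hq z]


lemma kl_path (hμ : IsPMF μ) (hq : ∀ x, 0 < μ x → IsPMF (q x))
    (hp : ∀ x, 0 < μ x → IsPMF (p x))
    (habs : ∀ x, 0 < μ x → ∀ z, p x z = 0 → q x z = 0) :
    ∀ H : ℕ,
    KL (pathPMF (latMarg μ q) (gibbsK μ q) H)
       (pathPMF (latMarg μ q) (gibbsK μ p) H) =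
      (H : ℝ) * ∑ z, latMarg μ q z * KL (gibbsK μ q z) (gibbsK μ p z) := by
  intro H
  induction H with
  | zero =>
    rw [Nat.cast_zero, zero_mul]
    unfold KL
    refine Finset.sum_eq_zero fun f _ => ?_
    simp only [pathPMF, Finset.univ_eq_empty, Finset.prod_empty, mul_one]
    by_cases h : latMarg μ q (f 0) = 0
    · rw [h, zero_mul]
    · rw [div_self h, Real.log_one, mul_zero]
  | succ H ih =>
    have key : KL (pathPMF (latMarg μ q) (gibbsK μ q) (H + 1))
        (pathPMF (latMarg μ q) (gibbsK μ p) (H + 1)) =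
        KL (pathPMF (latMarg μ q) (gibbsK μ q) H)
          (pathPMF (latMarg μ q) (gibbsK μ p) H) +
        ∑ z, latMarg μ q z * KL (gibbsK μ q z) (gibbsK μ p z) := by
      unfold KL
      rw [sum_snoc (fun f => pathPMF (latMarg μ q) (gibbsK μ q) (H + 1) f *
        Real.log (pathPMF (latMarg μ q) (gibbsK μ q) (H + 1) f /
          pathPMF (latMarg μ q) (gibbsK μ p) (H + 1) f))]
      have split : ∀ φ : Fin (H + 1) → Z, ∀ z : Z,
          pathPMF (latMarg μ q) (gibbsK μ q) (H + 1) (Fin.snoc φ z) *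
            Real.log (pathPMF (latMarg μ q) (gibbsK μ q) (H + 1) (Fin.snoc φ z) /
              pathPMF (latMarg μ q) (gibbsK μ p) (H + 1) (Fin.snoc φ z)) =
          gibbsK μ q (φ (Fin.last H)) z *
              (pathPMF (latMarg μ q) (gibbsK μ q) H φ *
                Real.log (pathPMF (latMarg μ q) (gibbsK μ q) H φ /
                  pathPMF (latMarg μ q) (gibbsK μ p) H φ)) +
            pathPMF (latMarg μ q) (gibbsK μ q) H φ *
              (gibbsK μ q (φ (Fin.last H)) z *
                Real.log (gibbsK μ q (φ (Fin.last H)) z /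
                  gibbsK μ p (φ (Fin.last H)) z)) := by
        intro φ z
        rw [pathPMF_snoc, pathPMF_snoc]
        refine klterm_mul _ _ _ _ (fun h => ?_) (fun h1 h2 => ?_)
        · exact (path_p_pos μ q p hμ hq hp habs H φ h).ne'
        · have hz : 0 < latMarg μ q (φ (Fin.last H)) :=
            path_support μ q hμ hq H φ h1 (Fin.last H)
          exact (gibbsK_pos_trans μ hμ q p hq hp habs _ _ h2).ne'
      rw [Finset.sum_congr rfl fun φ _ =>
        Finset.sum_congr rfl fun z _ => split φ z]
      have sumsplit : ∀ φ : Fin (H + 1) → Z,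
          (∑ z : Z, (gibbsK μ q (φ (Fin.last H)) z *
              (pathPMF (latMarg μ q) (gibbsK μ q) H φ *
                Real.log (pathPMF (latMarg μ q) (gibbsK μ q) H φ /
                  pathPMF (latMarg μ q) (gibbsK μ p) H φ)) +
            pathPMF (latMarg μ q) (gibbsK μ q) H φ *
              (gibbsK μ q (φ (Fin.last H)) z *
                Real.log (gibbsK μ q (φ (Fin.last H)) z /
                  gibbsK μ p (φ (Fin.last H)) z)))) =
          pathPMF (latMarg μ q) (gibbsK μ q) H φ *
            Real.log (pathPMF (latMarg μ q) (gibbsK μ q) H φ /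
              pathPMF (latMarg μ q) (gibbsK μ p) H φ) +
          pathPMF (latMarg μ q) (gibbsK μ q) H φ *
            KL (gibbsK μ q (φ (Fin.last H))) (gibbsK μ p (φ (Fin.last H))) := by
        intro φ
        rw [Finset.sum_add_distrib, ← Finset.sum_mul, ← Finset.mul_sum]
        congr 1
        by_cases hφ : pathPMF (latMarg μ q) (gibbsK μ q) H φ = 0
        · rw [hφ]; ring
        · rw [gibbsK_row_sum μ hμ q hq _
            (path_support μ q hμ hq H φ hφ (Fin.last H)).ne', one_mul]
      rw [Finset.sum_congr rfl fun φ _ => sumsplit φ, Finset.sum_add_distrib]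
      congr 1
      exact path_marg μ q hμ hq H
        (fun z0 => KL (gibbsK μ q z0) (gibbsK μ p z0))
    rw [key, ih]
    push_cast
    ring

end PathLemmas

section StepBound

variable {X Z : Type*} [Fintype X] [Fintype Z]
variable (μ : X → ℝ) (q p : X → Z → ℝ)

lemma claimA (hμ : IsPMF μ) (hq : ∀ x, 0 < μ x → IsPMF (q x)) :
    ∑ z, ∑ x, (μ x * q x z) * Real.log ((μ x * q x z) / (μ x * p x z)) =
      ∑ x, μ x * KL (q x) (p x) := by
  rw [Finset.sum_comm]
  refine Finset.sum_congr rfl fun x _ => ?_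
  unfold KL
  rw [Finset.mul_sum]
  refine Finset.sum_congr rfl fun z _ => ?_
  rcases (hμ.1 x).eq_or_lt with h | h
  · rw [← h]; ring_nf
  · rw [mul_div_mul_left (q x z) (p x z) h.ne']
    ring

lemma claimB (hμ : IsPMF μ) (hq : ∀ x, 0 < μ x → IsPMF (q x))
    (hp : ∀ x, 0 < μ x → IsPMF (p x))
    (habs : ∀ x, 0 < μ x → ∀ z, p x z = 0 → q x z = 0) :
    ∑ z, ∑ x, (μ x * q x z) * Real.log ((μ x * q x z) / (μ x * p x z)) =
      KL (latMarg μ q) (latMarg μ p) +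
        ∑ z, latMarg μ q z * KL (revCond μ q z) (revCond μ p z) := by
  unfold KL
  rw [← Finset.sum_add_distrib]
  refine Finset.sum_congr rfl fun z _ => ?_
  by_cases hz : latMarg μ q z = 0
  · rw [Finset.sum_eq_zero (fun x _ => by
      rw [lm_term_zero μ hμ q hq z hz x]; ring), hz]
    simp
  have hz' : 0 < latMarg μ q z := lt_of_le_of_ne (lm_nonneg μ hμ q hq z) (Ne.symm hz)
  have hpz : 0 < latMarg μ p z := lm_pos_trans μ hμ q p hq hp habs z hz'
  have hterm : ∀ x : X, (μ x * q x z) * Real.log ((μ x * q x z) / (μ x * p x z)) =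
      revCond μ q z x * (latMarg μ q z *
          Real.log (latMarg μ q z / latMarg μ p z)) +
        latMarg μ q z * (revCond μ q z x *
          Real.log (revCond μ q z x / revCond μ p z x)) := by
    intro x
    have e1 : μ x * q x z = latMarg μ q z * revCond μ q z x := by
      unfold revCond
      rw [mul_div_cancel₀ _ hz]
    have e2 : μ x * p x z = latMarg μ p z * revCond μ p z x := by
      unfold revCond
      rw [mul_div_cancel₀ _ hpz.ne']
    rw [e1, e2]
    refine klterm_mul _ _ _ _ (fun _ => hpz.ne') (fun _ hc => ?_)
    have hnum : μ x * q x z ≠ 0 := by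
      intro h'
      exact hc (by simp [revCond, h'])
    have hx : 0 < μ x := lt_of_le_of_ne (hμ.1 x)
      (fun h' => hnum (by rw [← h', zero_mul]))
    have hqz : q x z ≠ 0 := fun h' => hnum (by rw [h']; ring)
    have hpxz : p x z ≠ 0 := fun h' => hqz (habs x hx z h')
    exact div_ne_zero (mul_ne_zero hx.ne' hpxz) hpz.ne'
  rw [Finset.sum_congr rfl fun x _ => hterm x, Finset.sum_add_distrib,
    ← Finset.sum_mul, ← Finset.mul_sum, revCond_sum_one μ q z hz, one_mul]

lemma step_row (hμ : IsPMF μ) (hq : ∀ x, 0 < μ x → IsPMF (q x))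
    (hp : ∀ x, 0 < μ x → IsPMF (p x))
    (habs : ∀ x, 0 < μ x → ∀ z, p x z = 0 → q x z = 0)
    (z : Z) (hz : 0 < latMarg μ q z) :
    KL (gibbsK μ q z) (gibbsK μ p z) ≤
      KL (revCond μ q z) (revCond μ p z) +
        ∑ x, revCond μ q z x * KL (q x) (p x) := by
  have hpz : 0 < latMarg μ p z := lm_pos_trans μ hμ q p hq hp habs z hz
  have rq_nonneg : ∀ x, 0 ≤ revCond μ q z x := fun x =>
    div_nonneg (term_nonneg μ hμ q hq x z) (lm_nonneg μ hμ q hq z)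
  have rp_nonneg : ∀ x, 0 ≤ revCond μ p z x := fun x =>
    div_nonneg (term_nonneg μ hμ p hp x z) (lm_nonneg μ hμ p hp z)
  have rq_mu : ∀ x, μ x = 0 → revCond μ q z x = 0 := fun x h => by
    simp [revCond, h]
  have rp_abs : ∀ x, 0 < μ x → revCond μ p z x = 0 → revCond μ q z x = 0 := by
    intro x hx h
    have : μ x * p x z = 0 := by
      by_contra h'
      exact absurd h (div_ne_zero h' hpz.ne')
    have hpxz : p x z = 0 := by
      rcases mul_eq_zero.1 this with h' | h'
      · exact absurd h' hx.ne'
      · exact h'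
    simp [revCond, habs x hx z hpxz]
  -- First step: log-sum inequality pointwise in z'
  have step1 : KL (gibbsK μ q z) (gibbsK μ p z) ≤
      ∑ z', ∑ x, (revCond μ q z x * q x z') *
        Real.log ((revCond μ q z x * q x z') / (revCond μ p z x * p x z')) := by
    unfold KL gibbsK
    refine Finset.sum_le_sum fun z' _ => ?_
    refine log_sum_ineq Finset.univ _ _ (fun x _ => ?_) (fun x _ => ?_)
      (fun x _ hb => ?_)
    · rcases (hμ.1 x).eq_or_lt with h | h
      · rw [rq_mu x h.symm]; simp
      · exact mul_nonneg (rq_nonneg x) ((hq x h).1 z')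
    · rcases (hμ.1 x).eq_or_lt with h | h
      · have : revCond μ p z x = 0 := by simp [revCond, ← h]
        rw [this]; simp
      · exact mul_nonneg (rp_nonneg x) ((hp x h).1 z')
    · rcases (hμ.1 x).eq_or_lt with h | h
      · rw [rq_mu x h.symm]; ring
      · rcases mul_eq_zero.1 hb with h' | h'
        · rw [rp_abs x h h']; ring
        · rw [habs x h z' h']; ring
  refine step1.trans (le_of_eq ?_)
  rw [Finset.sum_comm]
  have hterm : ∀ x : X, ∀ z' : Z,
      (revCond μ q z x * q x z') *
        Real.log ((revCond μ q z x * q x z') / (revCond μ p z x * p x z')) =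
      q x z' * (revCond μ q z x *
          Real.log (revCond μ q z x / revCond μ p z x)) +
        revCond μ q z x * (q x z' * Real.log (q x z' / p x z')) := by
    intro x z'
    refine klterm_mul _ _ _ _ (fun h => ?_) (fun h1 h2 => ?_)
    · intro h'
      rcases (hμ.1 x).eq_or_lt with hx | hx
      · exact h (rq_mu x hx.symm)
      · exact h (rp_abs x hx h')
    · intro h'
      rcases (hμ.1 x).eq_or_lt with hx | hx
      · exact h1 (rq_mu x hx.symm)
      · exact h2 (habs x hx z' h')
  have per_x : ∀ x : X,
      (∑ z', (revCond μ q z x * q x z') *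
        Real.log ((revCond μ q z x * q x z') / (revCond μ p z x * p x z'))) =
      revCond μ q z x * Real.log (revCond μ q z x / revCond μ p z x) +
        revCond μ q z x * KL (q x) (p x) := by
    intro x
    rw [Finset.sum_congr rfl fun z' _ => hterm x z', Finset.sum_add_distrib,
      ← Finset.sum_mul, ← Finset.mul_sum]
    rcases (hμ.1 x).eq_or_lt with h | h
    · rw [rq_mu x h.symm]
      unfold KL
      ring
    · rw [(hq x h).2, one_mul]
      unfold KL
      rfl
  rw [Finset.sum_congr rfl fun x _ => per_x x, Finset.sum_add_distrib]
  unfold KL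
  rfl

lemma step_bound (hμ : IsPMF μ) (hq : ∀ x, 0 < μ x → IsPMF (q x))
    (hp : ∀ x, 0 < μ x → IsPMF (p x))
    (habs : ∀ x, 0 < μ x → ∀ z, p x z = 0 → q x z = 0) :
    ∑ z, latMarg μ q z * KL (gibbsK μ q z) (gibbsK μ p z) ≤
      2 * (∑ x, μ x * KL (q x) (p x)) - KL (latMarg μ q) (latMarg μ p) := by
  have h1 : ∑ z, latMarg μ q z * KL (gibbsK μ q z) (gibbsK μ p z) ≤
      ∑ z, (latMarg μ q z * KL (revCond μ q z) (revCond μ p z) +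
        ∑ x, (μ x * q x z) * KL (q x) (p x)) := by
    refine Finset.sum_le_sum fun z _ => ?_
    by_cases hz : latMarg μ q z = 0
    · rw [hz, zero_mul, zero_mul, zero_add]
      refine Finset.sum_nonneg fun x _ => ?_
      rw [lm_term_zero μ hμ q hq z hz x, zero_mul]
    have hz' : 0 < latMarg μ q z :=
      lt_of_le_of_ne (lm_nonneg μ hμ q hq z) (Ne.symm hz)
    have := mul_le_mul_of_nonneg_left
      (step_row μ q p hμ hq hp habs z hz') hz'.le
    refine this.trans (le_of_eq ?_)
    rw [mul_add]
    congr 1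
    rw [Finset.mul_sum]
    refine Finset.sum_congr rfl fun x _ => ?_
    have : latMarg μ q z * revCond μ q z x = μ x * q x z := by
      unfold revCond
      rw [mul_div_cancel₀ _ hz]
    rw [← this]
    ring
  have h2 : ∑ z, ∑ x, (μ x * q x z) * KL (q x) (p x) =
      ∑ x, μ x * KL (q x) (p x) := by
    rw [Finset.sum_comm]
    refine Finset.sum_congr rfl fun x _ => ?_
    rw [← Finset.sum_mul, ← Finset.mul_sum]
    rcases (hμ.1 x).eq_or_lt with h | h
    · rw [← h]; ring
    · rw [(hq x h).2, mul_one]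
  have h3 : ∑ z, latMarg μ q z * KL (revCond μ q z) (revCond μ p z) =
      (∑ x, μ x * KL (q x) (p x)) - KL (latMarg μ q) (latMarg μ p) := by
    have ha := claimA μ q p hμ hq
    have hb := claimB μ q p hμ hq hp habs
    linarith
  rw [Finset.sum_add_distrib, h2, h3] at h1
  linarith

end StepBound

/-- **Posterior-Gibbs path-space bound (finite horizon).**
(a) `q̄` is stationary for `K_q`; (b) with both `H`-step path laws started from
`q̄`, `KL(P_q^H ‖ P_p^H) ≤ H·(2·Δ̄ − KL(q̄‖p̄))`. -/
theorem path_space_bound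
    {X Z : Type*} [Fintype X] [Fintype Z]
    (μ : X → ℝ) (hμ : IsPMF μ) (q p : X → Z → ℝ)
    (hq : ∀ x, 0 < μ x → IsPMF (q x)) (hp : ∀ x, 0 < μ x → IsPMF (p x))
    (habs : ∀ x, 0 < μ x → ∀ z, p x z = 0 → q x z = 0)
    (H : ℕ) (hH : 0 < H) :
    (∀ z' : Z, ∑ z, latMarg μ q z * gibbsK μ q z z' = latMarg μ q z') ∧
    KL (pathPMF (latMarg μ q) (gibbsK μ q) H)
       (pathPMF (latMarg μ q) (gibbsK μ p) H)
      ≤ (H : ℝ) *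
          (2 * (∑ x, μ x * KL (q x) (p x)) - KL (latMarg μ q) (latMarg μ p)) := by
  refine ⟨fun z' => stationary μ hμ q hq z', ?_⟩
  rw [kl_path μ q p hμ hq hp habs H]
  exact mul_le_mul_of_nonneg_left (step_bound μ q p hμ hq hp habs)
    (Nat.cast_nonneg H)
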